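/- For n ≥ 1, N ≥ 2 and z ∈ ℂ: |d/dz (E_{1/n}(z) − E_{1/n}^{nN}(z))| ≤ n|z|^{n−1} ∑_{l=1}^n |z|^{n(N−1)+l}/Γ(N+l/n) · e^{|Re(z^n)|}. -/

import Mathlib

/-!
Differentiating termwise and using `m / Γ(m/n + 1) = n / Γ(m/n)`, the derivative of the tail is
`n z^(n-1) ∑_{l=1}^n z^(n(N-1)+l) F_{N+l/n}(z^n)` with `F_a(u) = ∑_q u^q / Γ(a + q)`: the
exponents `m > nN` are sorted by their residue mod `n`. Expanding `exp` and integrating against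
the Beta weight gives `Γ(a-1) F_a(u) = ∫₀¹ (1-t)^(a-2) e^(ut) dt` for `a ≥ 2`, and since
`|e^(ut)| ≤ e^|Re u|` on `[0, 1]`, `|F_a(u)| ≤ e^|Re u| / ((a-1) Γ(a-1)) = e^|Re u| / Γ(a)`;
here `a = N + l/n ≥ 2` because `N ≥ 2`.
-/

open Real Finset

/-- The Mittag-Leffler function of parameter `1/n` (complex argument). -/
noncomputable def ML (n : ℕ) (z : ℂ) : ℂ :=
  ∑' m : ℕ, z ^ m / (Real.Gamma ((m : ℝ) / n + 1) : ℂ)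

/-- Its truncation at degree `nN`. -/
noncomputable def MLtrunc (n N : ℕ) (z : ℂ) : ℂ :=
  ∑ m ∈ Finset.range (n * N + 1), z ^ m / (Real.Gamma ((m : ℝ) / n + 1) : ℂ)

open scoped Nat

theorem Real.Gamma_mul_factorial_le_Gamma_add {a : ℝ} (ha : 1 ≤ a) (j : ℕ) :
    Real.Gamma a * j ! ≤ Real.Gamma (a + j) := by
  induction j with
  | zero => simp
  | succ j ih =>
    have hpos : 0 < a + j := by positivity
    calc Real.Gamma a * (j + 1)! = Real.Gamma a * j ! * (j + 1) := by
          push_cast [Nat.factorial_succ]; ring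
      _ ≤ Real.Gamma (a + j) * (a + j) := by
          exact mul_le_mul ih (by linarith) (by positivity) (Real.Gamma_pos_of_pos hpos).le
      _ = Real.Gamma (a + (j + 1 : ℕ)) := by
          rw [Nat.cast_succ, ← add_assoc, Real.Gamma_add_one hpos.ne', mul_comm]

theorem Real.summable_pow_div_Gamma_add {a ρ : ℝ} (ha : 1 ≤ a) (hρ : 0 ≤ ρ) :
    Summable fun j : ℕ => ρ ^ j / Real.Gamma (a + j) := by
  refine ((Real.summable_pow_div_factorial ρ).mul_left (Real.Gamma a)⁻¹).of_nonneg_of_le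
    (fun j => div_nonneg (by positivity) (Real.Gamma_pos_of_pos (by positivity)).le)
    fun j => ?_
  calc ρ ^ j / Real.Gamma (a + j) ≤ ρ ^ j / (Real.Gamma a * j !) :=
        div_le_div_of_nonneg_left (by positivity) (by positivity)
          (Real.Gamma_mul_factorial_le_Gamma_add ha j)
    _ = (Real.Gamma a)⁻¹ * (ρ ^ j / j !) := by field_simp

theorem integral_one_sub_rpow_mul_pow {c : ℝ} (hc : 0 < c) (j : ℕ) :
    ∫ t in (0 : ℝ)..1, (1 - t) ^ (c - 1) * t ^ j
      = j ! * Real.Gamma c / Real.Gamma (c + j + 1) := by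
  have hbeta := Complex.betaIntegral_eq_Gamma_mul_div (j + 1) c
    (by simp only [Complex.add_re, Complex.natCast_re, Complex.one_re]; positivity)
    (by simpa using hc)
  rw [Complex.betaIntegral] at hbeta
  rw [show ((j : ℂ) + 1 + c) = ((c + j + 1 : ℝ) : ℂ) by push_cast; ring,
    Complex.Gamma_nat_eq_factorial, Complex.Gamma_ofReal, Complex.Gamma_ofReal] at hbeta
  apply Complex.ofReal_injective
  rw [← intervalIntegral.integral_ofReal]
  push_cast
  rw [← hbeta]
  refine intervalIntegral.integral_congr fun t ht => ?_
  rw [Set.uIcc_of_le zero_le_one] at ht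
  have h1t : 0 ≤ 1 - t := by linarith [ht.2]
  rw [add_sub_cancel_right, Complex.cpow_natCast, mul_comm]
  congr 1
  rw [Complex.ofReal_cpow h1t]
  push_cast; rfl

theorem hasSum_integral_one_sub_rpow_mul_pow_div_factorial {p : ℝ} (hp : 0 ≤ p) (u : ℂ) :
    HasSum (fun j : ℕ => ∫ t in (0 : ℝ)..1, (((1 - t) ^ p : ℝ) : ℂ) * ((u * t) ^ j / j !))
      (∫ t in (0 : ℝ)..1, (((1 - t) ^ p : ℝ) : ℂ) * Complex.exp (u * t)) := by
  have hweight : Continuous fun t : ℝ => (((1 - t) ^ p : ℝ) : ℂ) :=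
    Complex.continuous_ofReal.comp
      ((continuous_const.sub continuous_id).rpow_const fun _ => Or.inr hp)
  refine intervalIntegral.hasSum_integral_of_dominated_convergence
    (F := fun j (t : ℝ) => (((1 - t) ^ p : ℝ) : ℂ) * ((u * t) ^ j / j !))
    (f := fun t => (((1 - t) ^ p : ℝ) : ℂ) * Complex.exp (u * t))
    (fun j _ => ‖u‖ ^ j / j !) (fun j => ?_) (fun j => ?_)
    (.of_forall fun _ _ => Real.summable_pow_div_factorial ‖u‖) intervalIntegrable_const
    (.of_forall fun t _ => ?_)
  · exact (hweight.mul (((continuous_const.mul Complex.continuous_ofReal).pow j).div_const _))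
      |>.aestronglyMeasurable
  · refine .of_forall fun t ht => ?_
    rw [Set.uIoc_of_le zero_le_one] at ht
    have h1t : 0 ≤ 1 - t := by linarith [ht.2]
    have hw : (1 - t) ^ p ≤ 1 := Real.rpow_le_one h1t (by linarith [ht.1]) hp
    have hut0 : 0 ≤ ‖u‖ * t := mul_nonneg (norm_nonneg u) ht.1.le
    have hut : ‖u‖ * t ≤ ‖u‖ := mul_le_of_le_one_right (norm_nonneg u) ht.2
    rw [norm_mul, norm_div, norm_pow, norm_mul, Complex.norm_real, Complex.norm_real,
      Complex.norm_natCast, Real.norm_of_nonneg (Real.rpow_nonneg h1t _),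
      Real.norm_of_nonneg ht.1.le, ← one_mul (‖u‖ ^ j / j !)]
    exact mul_le_mul hw (by gcongr) (by positivity) zero_le_one
  · exact (Complex.exp_eq_exp_ℂ ▸ NormedSpace.expSeries_div_hasSum_exp (𝔸 := ℂ) _).mul_left _

theorem integral_one_sub_rpow_mul_pow_div_factorial {a : ℝ} (ha : 1 < a) (u : ℂ) (j : ℕ) :
    ∫ t in (0 : ℝ)..1, (((1 - t) ^ (a - 2) : ℝ) : ℂ) * ((u * t) ^ j / j !)
      = (Real.Gamma (a - 1) : ℂ) * (u ^ j / (Real.Gamma (a + j) : ℂ)) := by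
  have hbeta := integral_one_sub_rpow_mul_pow (c := a - 1) (by linarith) j
  rw [show a - 1 - 1 = a - 2 by ring, show a - 1 + j + 1 = a + j by ring] at hbeta
  have hfac : (j ! : ℂ) ≠ 0 := by exact_mod_cast j.factorial_ne_zero
  have hΓ : (Real.Gamma (a + j) : ℂ) ≠ 0 :=
    Complex.ofReal_ne_zero.mpr (Real.Gamma_pos_of_pos (by positivity)).ne'
  calc ∫ t in (0 : ℝ)..1, (((1 - t) ^ (a - 2) : ℝ) : ℂ) * ((u * t) ^ j / j !)
      = u ^ j / j ! * ∫ t in (0 : ℝ)..1, (((1 - t) ^ (a - 2) * t ^ j : ℝ) : ℂ) := by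
        rw [← intervalIntegral.integral_const_mul]
        refine intervalIntegral.integral_congr fun t _ => ?_
        push_cast
        ring
    _ = _ := by
        rw [intervalIntegral.integral_ofReal, hbeta]
        push_cast
        field_simp

theorem hasSum_pow_div_Gamma_add {a : ℝ} (ha : 2 ≤ a) (u : ℂ) :
    HasSum (fun j : ℕ => u ^ j / (Real.Gamma (a + j) : ℂ))
      ((Real.Gamma (a - 1) : ℂ)⁻¹ *
        ∫ t in (0 : ℝ)..1, (((1 - t) ^ (a - 2) : ℝ) : ℂ) * Complex.exp (u * t)) := by
  have hΓ : (Real.Gamma (a - 1) : ℂ) ≠ 0 :=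
    Complex.ofReal_ne_zero.mpr (Real.Gamma_pos_of_pos (by linarith)).ne'
  rw [← hasSum_mul_left_iff hΓ, mul_inv_cancel_left₀ hΓ]
  simpa only [integral_one_sub_rpow_mul_pow_div_factorial (by linarith : 1 < a)] using
    hasSum_integral_one_sub_rpow_mul_pow_div_factorial (by linarith : 0 ≤ a - 2) u

theorem norm_integral_one_sub_rpow_mul_cexp_le {p : ℝ} (hp : 0 ≤ p) (u : ℂ) :
    ‖∫ t in (0 : ℝ)..1, (((1 - t) ^ p : ℝ) : ℂ) * Complex.exp (u * t)‖
      ≤ Real.exp |u.re| / (p + 1) := by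
  have hweight : Continuous fun t : ℝ => (1 - t) ^ p :=
    (continuous_const.sub continuous_id).rpow_const fun _ => Or.inr hp
  calc ‖∫ t in (0 : ℝ)..1, (((1 - t) ^ p : ℝ) : ℂ) * Complex.exp (u * t)‖
      ≤ ∫ t in (0 : ℝ)..1, (1 - t) ^ p * Real.exp |u.re| := by
        refine intervalIntegral.norm_integral_le_of_norm_le zero_le_one
          (.of_forall fun t ht => ?_) ((hweight.mul continuous_const).intervalIntegrable 0 1)
        have h1t : 0 ≤ 1 - t := by linarith [ht.2]
        rw [norm_mul, Complex.norm_real, Real.norm_of_nonneg (Real.rpow_nonneg h1t _),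
          Complex.norm_exp]
        gcongr
        calc (u * t).re = u.re * t := by simp
          _ ≤ |u.re| * 1 := mul_le_mul (le_abs_self _) ht.2 ht.1.le (abs_nonneg _)
          _ = |u.re| := mul_one _
    _ = Real.exp |u.re| / (p + 1) := by
        rw [intervalIntegral.integral_mul_const,
          intervalIntegral.integral_comp_sub_left (fun s : ℝ => s ^ p), sub_self, sub_zero,
          integral_rpow (Or.inl (by linarith)), Real.one_rpow,
          Real.zero_rpow (by linarith)]
        ring

theorem norm_tsum_pow_div_Gamma_add_le {a : ℝ} (ha : 2 ≤ a) (u : ℂ) :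
    ‖∑' j : ℕ, u ^ j / (Real.Gamma (a + j) : ℂ)‖ ≤ Real.exp |u.re| / Real.Gamma a := by
  have hΓ : 0 < Real.Gamma (a - 1) := Real.Gamma_pos_of_pos (by linarith)
  have hrec : Real.Gamma a = (a - 1) * Real.Gamma (a - 1) := by
    rw [← Real.Gamma_add_one (by linarith), sub_add_cancel]
  rw [(hasSum_pow_div_Gamma_add ha u).tsum_eq, norm_mul, norm_inv, Complex.norm_real,
    Real.norm_of_nonneg hΓ.le]
  calc (Real.Gamma (a - 1))⁻¹ * ‖∫ t in (0 : ℝ)..1,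
        (((1 - t) ^ (a - 2) : ℝ) : ℂ) * Complex.exp (u * t)‖
      ≤ (Real.Gamma (a - 1))⁻¹ * (Real.exp |u.re| / (a - 2 + 1)) := by
        gcongr
        exact norm_integral_one_sub_rpow_mul_cexp_le (by linarith) u
    _ = Real.exp |u.re| / Real.Gamma a := by
        rw [hrec, show a - 2 + 1 = a - 1 by ring]
        field_simp

theorem Complex.summable_pow_div_Gamma_add {a : ℝ} (ha : 1 ≤ a) (u : ℂ) :
    Summable fun j : ℕ => u ^ j / (Real.Gamma (a + j) : ℂ) := by
  refine (Real.summable_pow_div_Gamma_add ha (norm_nonneg u)).of_norm_bounded fun j => ?_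
  rw [norm_div, norm_pow, Complex.norm_real,
    Real.norm_of_nonneg (Real.Gamma_pos_of_pos (by positivity)).le]

section ResidueClasses

variable {n : ℕ} [NeZero n]

theorem HasSum.eq_sum_residues {α : Type*} [AddCommMonoid α] [TopologicalSpace α]
    [ContinuousAdd α] [T3Space α] {f : ℕ → α} {a : α} {g : Fin n → α} (hf : HasSum f a)
    (hg : ∀ r : Fin n, HasSum (fun q => f (q * n + r)) (g r)) : a = ∑ r, g r :=
  ((((Equiv.prodComm _ _).trans (Nat.divModEquiv n).symm).hasSum_iff.mpr hf).prod_fiberwise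
    hg).unique (hasSum_fintype g)

theorem summable_of_summable_residues {f : ℕ → ℝ} (hf : 0 ≤ f)
    (h : ∀ r : Fin n, Summable fun q => f (q * n + r)) : Summable f := by
  rw [← ((Equiv.prodComm _ _).trans (Nat.divModEquiv n).symm).summable_iff]
  exact (summable_prod_of_nonneg fun _ => hf _).mpr ⟨h, .of_finite⟩

end ResidueClasses

theorem summable_pow_div_Gamma_div_add_one {n : ℕ} (hn : n ≠ 0) {ρ : ℝ} (hρ : 0 ≤ ρ) :
    Summable fun m : ℕ => ρ ^ m / Real.Gamma ((m : ℝ) / n + 1) := by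
  have : NeZero n := ⟨hn⟩
  refine summable_of_summable_residues (n := n)
    (fun m => div_nonneg (by positivity) (Real.Gamma_pos_of_pos (by positivity)).le)
    fun r => ((Real.summable_pow_div_Gamma_add (a := (r : ℝ) / n + 1)
      (le_add_of_nonneg_left (by positivity))
      (pow_nonneg hρ n)).mul_left (ρ ^ (r : ℕ))).congr fun q => ?_
  have hn' : (n : ℝ) ≠ 0 := Nat.cast_ne_zero.mpr hn
  rw [← pow_mul, mul_div_assoc', ← pow_add, mul_comm n q, add_comm (r : ℕ)]
  congr 2
  push_cast
  field_simp
  ring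

theorem ML_sub_MLtrunc_eq_tsum {n : ℕ} (hn : n ≠ 0) (N : ℕ) (w : ℂ) :
    ML n w - MLtrunc n N w
      = ∑' k : ℕ, (Real.Gamma (((k + (n * N + 1) : ℕ) : ℝ) / n + 1) : ℂ)⁻¹
          * w ^ (k + (n * N + 1)) := by
  have hsum : Summable fun m : ℕ => w ^ m / (Real.Gamma ((m : ℝ) / n + 1) : ℂ) := by
    refine (summable_pow_div_Gamma_div_add_one hn (norm_nonneg w)).of_norm_bounded fun m => ?_
    rw [norm_div, norm_pow, Complex.norm_real,
      Real.norm_of_nonneg (Real.Gamma_pos_of_pos (by positivity)).le]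
  rw [ML, MLtrunc, ← hsum.sum_add_tsum_nat_add (n * N + 1), add_sub_cancel_left]
  simp only [div_eq_inv_mul]

section PowerSeries

variable {c : ℕ → ℂ} {e : ℕ → ℕ}

theorem norm_mul_pow_le_of_mem_ball {R : ℝ} {w : ℂ} (hw : w ∈ Metric.ball (0 : ℂ) R)
    (a : ℂ) (m : ℕ) : ‖a * w ^ m‖ ≤ ‖a‖ * R ^ m := by
  rw [norm_mul, norm_pow]
  gcongr
  exact (mem_ball_zero_iff.mp hw).le

theorem differentiable_tsum_mul_pow
    (hc : ∀ ρ : ℝ, 0 ≤ ρ → Summable fun k => ‖c k‖ * ρ ^ e k) :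
    Differentiable ℂ fun w => ∑' k, c k * w ^ e k := fun z =>
  (Complex.differentiableOn_tsum_of_summable_norm (hc (‖z‖ + 1) (by positivity))
    (fun k => (differentiable_const _ |>.mul (differentiable_pow _)).differentiableOn)
    Metric.isOpen_ball fun k _ hw => norm_mul_pow_le_of_mem_ball hw _ _).differentiableAt
    (Metric.isOpen_ball.mem_nhds (mem_ball_zero_iff.mpr (lt_add_one ‖z‖)))

theorem hasSum_deriv_tsum_mul_pow (hc : ∀ ρ : ℝ, 0 ≤ ρ → Summable fun k => ‖c k‖ * ρ ^ e k)
    (z : ℂ) :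
    HasSum (fun k => c k * (e k * z ^ (e k - 1))) (deriv (fun w => ∑' k, c k * w ^ e k) z) := by
  have h := Complex.hasSum_deriv_of_summable_norm (hc (‖z‖ + 1) (by positivity))
    (fun k => (differentiable_const _ |>.mul (differentiable_pow _)).differentiableOn)
    Metric.isOpen_ball (fun k _ hw => norm_mul_pow_le_of_mem_ball hw _ _)
    (mem_ball_zero_iff.mpr (lt_add_one ‖z‖))
  simpa only [((hasDerivAt_pow _ z).const_mul _).deriv] using h

end PowerSeries

-- `Γ(x + 1) = x Γ(x)` turns `m / Γ(m/n + 1)` into `n / Γ(m/n)`, and `m/n = N + (r+1)/n + q`.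
theorem inv_Gamma_mul_deriv_pow_eq {n N : ℕ} (hn : 1 ≤ n) (hN : 1 ≤ N) (r q : ℕ) (z : ℂ) :
    (Real.Gamma (((q * n + r + (n * N + 1) : ℕ) : ℝ) / n + 1) : ℂ)⁻¹
        * ((q * n + r + (n * N + 1) : ℕ) * z ^ (q * n + r + (n * N + 1) - 1))
      = n * z ^ (n - 1) * (z ^ (n * (N - 1) + (r + 1))
          * ((z ^ n) ^ q / (Real.Gamma ((N : ℝ) + (r + 1 : ℕ) / n + q) : ℂ))) := by
  set x : ℝ := N + (r + 1 : ℕ) / n + q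
  have hn' : (n : ℝ) ≠ 0 := by positivity
  have hx : 0 < x := by positivity
  have hm : ((q * n + r + (n * N + 1) : ℕ) : ℝ) = n * x := by
    simp only [x]; push_cast; field_simp; ring
  have hexp : q * n + r + (n * N + 1) - 1 = (n - 1) + (n * (N - 1) + (r + 1)) + n * q := by
    obtain ⟨n, rfl⟩ : ∃ k, n = k + 1 := ⟨n - 1, by omega⟩
    obtain ⟨N, rfl⟩ : ∃ k, N = k + 1 := ⟨N - 1, by omega⟩
    simp only [Nat.add_sub_cancel]
    ring_nf
    omega
  have hΓ : (Real.Gamma x : ℂ) ≠ 0 :=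
    Complex.ofReal_ne_zero.mpr (Real.Gamma_pos_of_pos hx).ne'
  have hmC : ((q * n + r + (n * N + 1) : ℕ) : ℂ) = n * (x : ℂ) := by exact_mod_cast hm
  rw [hmC, hm, mul_div_cancel_left₀ _ hn', Real.Gamma_add_one hx.ne', hexp, pow_add, pow_add,
    pow_mul]
  have hxC : (x : ℂ) ≠ 0 := Complex.ofReal_ne_zero.mpr hx.ne'
  push_cast
  field_simp

theorem hasDerivAt_ML_sub_MLtrunc {n N : ℕ} (hn : 1 ≤ n) (hN : 1 ≤ N) (z : ℂ) :
    HasDerivAt (fun w => ML n w - MLtrunc n N w)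
      (n * z ^ (n - 1) * ∑ l ∈ Icc 1 n, z ^ (n * (N - 1) + l)
        * ∑' q : ℕ, (z ^ n) ^ q / (Real.Gamma ((N : ℝ) + l / n + q) : ℂ)) z := by
  have : NeZero n := ⟨by omega⟩
  set c : ℕ → ℂ := fun k => (Real.Gamma (((k + (n * N + 1) : ℕ) : ℝ) / n + 1) : ℂ)⁻¹
  have hc : ∀ ρ : ℝ, 0 ≤ ρ → Summable fun k => ‖c k‖ * ρ ^ (k + (n * N + 1)) := fun ρ hρ =>
    ((summable_nat_add_iff _).mpr
      (summable_pow_div_Gamma_div_add_one (n := n) (by omega) hρ)).congr fun k => by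
      rw [norm_inv, Complex.norm_real,
        Real.norm_of_nonneg (Real.Gamma_pos_of_pos (by positivity)).le, inv_mul_eq_div]
  have htail : (fun w => ML n w - MLtrunc n N w) = fun w => ∑' k, c k * w ^ (k + (n * N + 1)) :=
    funext (ML_sub_MLtrunc_eq_tsum (by omega) N)
  set g : ℕ → ℂ := fun l =>
    z ^ (n * (N - 1) + l) * ∑' q : ℕ, (z ^ n) ^ q / (Real.Gamma ((N : ℝ) + l / n + q) : ℂ)
  have hfiber : ∀ r : Fin n, HasSum (fun q => c (q * n + r)
      * ((q * n + r + (n * N + 1) : ℕ) * z ^ (q * n + r + (n * N + 1) - 1)))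
      (n * z ^ (n - 1) * g (r + 1)) := by
    intro r
    have ha : (1 : ℝ) ≤ N + (r + 1 : ℕ) / n :=
      le_add_of_le_of_nonneg (by exact_mod_cast hN) (by positivity)
    refine ((((Complex.summable_pow_div_Gamma_add ha (z ^ n)).hasSum.mul_left
      (z ^ (n * (N - 1) + (r + 1)))).mul_left (n * z ^ (n - 1)))).congr_fun fun q => ?_
    exact inv_Gamma_mul_deriv_pow_eq hn hN r q z
  rw [htail]
  refine (differentiable_tsum_mul_pow hc z).hasDerivAt.congr_deriv ?_
  rw [(hasSum_deriv_tsum_mul_pow hc z).eq_sum_residues hfiber, ← Finset.mul_sum,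
    ← Finset.Ico_add_one_right_eq_Icc, Finset.sum_Ico_eq_sum_range, Nat.add_sub_cancel,
    ← Fin.sum_univ_eq_sum_range]
  simp only [add_comm 1, g]

theorem mittagLeffler_tail_deriv_bound (n N : ℕ) (hn : 1 ≤ n) (hN : 2 ≤ N) (z : ℂ) :
    ∃ D : ℂ, HasDerivAt (fun w : ℂ => ML n w - MLtrunc n N w) D z ∧
      ‖D‖
        ≤ (n : ℝ) * ‖z‖ ^ (n - 1) *
            ((∑ l ∈ Finset.Icc 1 n,
                ‖z‖ ^ (n * (N - 1) + l) / Real.Gamma ((N : ℝ) + (l : ℝ) / n)) *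
              Real.exp |(z ^ n).re|) := by
  refine ⟨_, hasDerivAt_ML_sub_MLtrunc hn (by omega) z, ?_⟩
  rw [norm_mul, norm_mul, Complex.norm_natCast, norm_pow, Finset.sum_mul]
  gcongr
  refine (norm_sum_le _ _).trans (Finset.sum_le_sum fun l _ => ?_)
  have ha : (2 : ℝ) ≤ N + l / n :=
    le_add_of_le_of_nonneg (by exact_mod_cast hN) (by positivity)
  rw [norm_mul, norm_pow, div_mul_eq_mul_div, mul_div_assoc]
  gcongr
  exact norm_tsum_pow_div_Gamma_add_le ha _
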